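/- arXiv:2510.01131 — 8 statements merged into one kernel-verified Lean document; each statement's English description precedes it below -/
import Mathlib

section
/- The composition of normalized kernels fails to be associative: there exist finite sets and substochastic kernels f : X → MDY, g : Y → MDZ, h : Z → MDW (each either failure or a full distribution on each input) such that (f ⊛ g) ⊛ h ≠ f ⊛ (g ⊛ h), where ⊛ denotes composition followed by pointwise renormalization. -/
open scoped NNReal

/-- A normalized kernel: each input maps to either failure (`none`) or a
probability distribution. -/
def IsNormalizedKernel {X Y : Type*} [Fintype Y] (f : X → Option (Y → ℝ≥0)) : Prop :=
  ∀ x d, f x = some d → ∑ y, d y = 1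

/-- The substochastic kernel underlying a normalized kernel. -/
def toSub {X Y : Type*} (f : X → Option (Y → ℝ≥0)) : X → Y → ℝ≥0 :=
  fun x y => (f x).elim 0 (fun d => d y)

open scoped Classical in
/-- Renormalized composition of normalized kernels: compose as subdistributions
and renormalize; failure when the total mass is zero. -/
noncomputable def ncomp {X Y Z : Type*} [Fintype Y] [Fintype Z]
    (f : X → Option (Y → ℝ≥0)) (g : Y → Option (Z → ℝ≥0)) :
    X → Option (Z → ℝ≥0) := fun x =>
  if (∑ y, ∑ z, toSub f x y * toSub g y z) = 0 then none
  else some (fun z => (∑ y, toSub f x y * toSub g y z) /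
    (∑ y, ∑ z', toSub f x y * toSub g y z'))

/-- The renormalized composition of normalized kernels is not associative:
there is a concrete counterexample on finite sets. -/
theorem ncomp_not_associative :
    ∃ (f : Fin 1 → Option (Fin 2 → ℝ≥0)) (g : Fin 2 → Option (Fin 3 → ℝ≥0))
      (h : Fin 3 → Option (Fin 2 → ℝ≥0)),
      IsNormalizedKernel f ∧ IsNormalizedKernel g ∧ IsNormalizedKernel h ∧
      ncomp (ncomp f g) h ≠ ncomp f (ncomp g h) := by
  refine ⟨fun _ => some ![1/2, 1/2],
    ![some ![1/3, 0, 2/3], some ![0, 1/2, 1/2]],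
    ![some ![1, 0], some ![0, 1], none], ?_, ?_, ?_, ?_⟩
  · intro x d hd
    obtain rfl : d = ![1/2, 1/2] := by injection hd with hd; exact hd.symm
    simp [Fin.sum_univ_succ]
    rw [← NNReal.coe_inj]; push_cast; norm_num
  · intro x d hd
    fin_cases x <;> simp at hd <;> subst hd <;>
      simp [Fin.sum_univ_succ] <;> (rw [← NNReal.coe_inj]; push_cast; norm_num)
  · intro x d hd
    fin_cases x <;> simp at hd
    · subst hd; simp [Fin.sum_univ_succ]
    · subst hd; simp [Fin.sum_univ_succ]
  · have hfg : ncomp (fun _ : Fin 1 => some ![(1:ℝ≥0)/2, 1/2])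
        ![some ![(1:ℝ≥0)/3, 0, 2/3], some ![0, 1/2, 1/2]]
        = fun _ => some ![1/6, 1/4, 7/12] := by
      funext x
      simp only [ncomp, toSub, Fin.sum_univ_succ, Fin.sum_univ_zero]
      norm_num
      funext z
      fin_cases z <;> (simp; rw [← NNReal.coe_inj]; push_cast; norm_num)
    have hgh : ncomp (![some ![(1:ℝ≥0)/3, 0, 2/3], some ![0, 1/2, 1/2]])
        ![some ![(1:ℝ≥0), 0], some ![0, 1], none]
        = ![some ![1, 0], some ![0, 1]] := by
      funext y
      fin_cases y <;>
        (simp only [ncomp, toSub, Fin.sum_univ_succ, Fin.sum_univ_zero]; norm_num) <;>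
        (funext z; fin_cases z <;> simp)
    rw [hfg, hgh]
    intro heq
    have h0 := congrFun heq 0
    simp only [ncomp, toSub, Fin.sum_univ_succ, Fin.sum_univ_zero] at h0
    norm_num at h0
    have h00 := congrFun h0 0
    simp at h00
    rw [← NNReal.coe_inj] at h00; push_cast at h00; norm_num at h00
end

section
/- The tensor of normalized kernels satisfies the interchange law up to renormalization: for normalized kernels f₁ : X₁ → MDY₁, f₂ : X₂ → MDY₂, g₁ : Y₁ → MDZ₁, g₂ : Y₂ → MDZ₂, the renormalized composition of the tensors equals the tensor of the renormalized compositions: (f₁ ⊗ f₂) ⊛ (g₁ ⊗ g₂) = (f₁ ⊛ g₁) ⊗ (f₂ ⊛ g₂). -/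
open scoped NNReal

/-- Tensor of normalized kernels: the product distribution when both are
defined, failure otherwise. -/
def ntensor {X₁ X₂ Y₁ Y₂ : Type*}
    (f₁ : X₁ → Option (Y₁ → ℝ≥0)) (f₂ : X₂ → Option (Y₂ → ℝ≥0)) :
    X₁ × X₂ → Option (Y₁ × Y₂ → ℝ≥0) := fun x =>
  match f₁ x.1, f₂ x.2 with
  | some d₁, some d₂ => some (fun y => d₁ y.1 * d₂ y.2)
  | _, _ => none

lemma toSub_ntensor {X₁ X₂ Y₁ Y₂ : Type*}
    (f₁ : X₁ → Option (Y₁ → ℝ≥0)) (f₂ : X₂ → Option (Y₂ → ℝ≥0))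
    (x : X₁ × X₂) (y : Y₁ × Y₂) :
    toSub (ntensor f₁ f₂) x y = toSub f₁ x.1 y.1 * toSub f₂ x.2 y.2 := by
  unfold toSub ntensor
  cases f₁ x.1 <;> cases f₂ x.2 <;> simp

lemma sum_prod_factor₁ {Y₁ Y₂ : Type*} [Fintype Y₁] [Fintype Y₂]
    (a : Y₁ → ℝ≥0) (b : Y₂ → ℝ≥0) :
    ∑ y : Y₁ × Y₂, a y.1 * b y.2 = (∑ y₁, a y₁) * (∑ y₂, b y₂) := by
  rw [Finset.sum_mul_sum, Fintype.sum_prod_type]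

lemma sum_prod_factor {Y₁ Y₂ Z₁ Z₂ : Type*} [Fintype Y₁] [Fintype Y₂] [Fintype Z₁] [Fintype Z₂]
    (a : Y₁ → Z₁ → ℝ≥0) (b : Y₂ → Z₂ → ℝ≥0) :
    ∑ y : Y₁ × Y₂, ∑ z : Z₁ × Z₂, a y.1 z.1 * b y.2 z.2
      = (∑ y₁, ∑ z₁, a y₁ z₁) * (∑ y₂, ∑ z₂, b y₂ z₂) := by
  have h1 : ∀ y : Y₁ × Y₂, ∑ z : Z₁ × Z₂, a y.1 z.1 * b y.2 z.2
      = (∑ z₁, a y.1 z₁) * (∑ z₂, b y.2 z₂) := by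
    intro y; rw [Finset.sum_mul_sum, Fintype.sum_prod_type]
  simp only [h1]
  conv_rhs => rw [Finset.sum_mul_sum]
  rw [Fintype.sum_prod_type]

/-- Interchange: the renormalized composition of tensors equals the tensor of
renormalized compositions. -/
theorem ntensor_interchange {X₁ X₂ Y₁ Y₂ Z₁ Z₂ : Type*}
    [Fintype Y₁] [Fintype Y₂] [Fintype Z₁] [Fintype Z₂]
    (f₁ : X₁ → Option (Y₁ → ℝ≥0)) (f₂ : X₂ → Option (Y₂ → ℝ≥0))
    (g₁ : Y₁ → Option (Z₁ → ℝ≥0)) (g₂ : Y₂ → Option (Z₂ → ℝ≥0))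
    (hf₁ : IsNormalizedKernel f₁) (hf₂ : IsNormalizedKernel f₂)
    (hg₁ : IsNormalizedKernel g₁) (hg₂ : IsNormalizedKernel g₂) :
    ncomp (ntensor f₁ f₂) (ntensor g₁ g₂) = ntensor (ncomp f₁ g₁) (ncomp f₂ g₂) := by
  classical
  funext x
  obtain ⟨x₁, x₂⟩ := x
  set S₁ := ∑ y, ∑ z, toSub f₁ x₁ y * toSub g₁ y z with hS₁
  set S₂ := ∑ y, ∑ z, toSub f₂ x₂ y * toSub g₂ y z with hS₂
  have hden : (∑ y : Y₁ × Y₂, ∑ z : Z₁ × Z₂,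
      toSub (ntensor f₁ f₂) (x₁, x₂) y * toSub (ntensor g₁ g₂) y z) = S₁ * S₂ := by
    have := sum_prod_factor (fun y z => toSub f₁ x₁ y * toSub g₁ y z)
      (fun y z => toSub f₂ x₂ y * toSub g₂ y z)
    simp only [toSub_ntensor, mul_mul_mul_comm] at this ⊢
    exact this
  have hnum : ∀ z : Z₁ × Z₂, (∑ y : Y₁ × Y₂,
      toSub (ntensor f₁ f₂) (x₁, x₂) y * toSub (ntensor g₁ g₂) y z)
      = (∑ y₁, toSub f₁ x₁ y₁ * toSub g₁ y₁ z.1) * (∑ y₂, toSub f₂ x₂ y₂ * toSub g₂ y₂ z.2) := by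
    intro z
    have := sum_prod_factor₁ (fun y => toSub f₁ x₁ y * toSub g₁ y z.1)
      (fun y => toSub f₂ x₂ y * toSub g₂ y z.2)
    simp only [toSub_ntensor, mul_mul_mul_comm] at this ⊢
    exact this
  show (if _ then _ else _) = _
  rw [hden]
  have hR : ntensor (ncomp f₁ g₁) (ncomp f₂ g₂) (x₁, x₂)
      = match (if S₁ = 0 then none else some (fun z₁ =>
          (∑ y, toSub f₁ x₁ y * toSub g₁ y z₁) / S₁) : Option (Z₁ → ℝ≥0)),
        (if S₂ = 0 then none else some (fun z₂ =>
          (∑ y, toSub f₂ x₂ y * toSub g₂ y z₂) / S₂) : Option (Z₂ → ℝ≥0)) with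
      | some d₁, some d₂ => some (fun z => d₁ z.1 * d₂ z.2)
      | _, _ => none := by
    unfold ntensor ncomp; rfl
  rw [hR]
  by_cases h₁ : S₁ = 0
  · simp [h₁]
  · by_cases h₂ : S₂ = 0
    · simp [h₂]
    · rw [if_neg h₁, if_neg h₂, if_neg (mul_ne_zero h₁ h₂)]
      simp only
      congr 1
      funext z
      rw [hnum z, div_mul_div_comm]
end

section
/- The renormalization equation holds for substochastic kernels: for substochastic kernels f : X → DMY and g : Y → DMZ, normalizing the composite f;g equals normalizing the composite of the normalization of f with g: n(f;g) = n(n(f)•;g), where n(f)• denotes the inclusion of the normalized kernel back into substochastic kernels. -/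
open scoped NNReal

/-- A substochastic kernel: each input yields a subdistribution. -/
def IsSubstochastic {X Y : Type*} [Fintype Y] (f : X → Y → ℝ≥0) : Prop :=
  ∀ x, ∑ y, f x y ≤ 1

/-- Composition of substochastic kernels. -/
def scomp {X Y Z : Type*} [Fintype Y] (f : X → Y → ℝ≥0) (g : Y → Z → ℝ≥0) :
    X → Z → ℝ≥0 := fun x z => ∑ y, f x y * g y z

open scoped Classical in
/-- Normalization of a substochastic kernel: at each input, the normalized
distribution, or failure when the total mass is zero. -/
noncomputable def norm {X Y : Type*} [Fintype Y] (f : X → Y → ℝ≥0) :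
    X → Option (Y → ℝ≥0) := fun x =>
  if (∑ y, f x y) = 0 then none else some (fun y => f x y / ∑ y', f x y')

/-- Inclusion of the normalization back into substochastic kernels:
failure becomes the zero subdistribution. -/
noncomputable def normIncl {X Y : Type*} [Fintype Y] (f : X → Y → ℝ≥0) :
    X → Y → ℝ≥0 := fun x y => ((norm f) x).elim 0 (fun d => d y)

/-! Normalizing `f` at `x` divides it by its mass `S`, so `(n(f)•; g)(x)` is `(f; g)(x)` scaled by
`S⁻¹`, and normalization is blind to nonzero scalars. When `S = 0`, `f x` and hence `(f; g)(x)`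
vanish, so both sides fail. -/

section

variable {X Y Z : Type*} [Fintype Y]

theorem norm_apply_of_eq_zero [Fintype Z] {h : X → Z → ℝ≥0} {x : X} (hx : h x = 0) :
    norm h x = none := by
  simp [_root_.norm, hx]

theorem norm_apply_eq_of_smul [Fintype Z] {h k : X → Z → ℝ≥0} {x : X} {c : ℝ≥0}
    (hk : k x = c • h x) (hc : c = 0 → h x = 0) : norm k x = norm h x := by
  rcases eq_or_ne c 0 with rfl | hc0
  · rw [norm_apply_of_eq_zero (hc rfl), norm_apply_of_eq_zero (by simp [hk])]
  have hsum : ∑ z, k x z = c * ∑ z, h x z := by simp [hk, Finset.mul_sum]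
  simp only [_root_.norm, hsum, mul_eq_zero, hc0, false_or]
  split_ifs
  · rfl
  · congr 1
    funext z
    simp [hk, mul_div_mul_left _ _ hc0]

/-- At an input of zero mass both sides vanish, since `0 / 0 = 0`. -/
theorem normIncl_apply (f : X → Y → ℝ≥0) (x : X) (y : Y) :
    normIncl f x y = f x y / ∑ y', f x y' := by
  by_cases hS : ∑ y', f x y' = 0 <;> simp [normIncl, _root_.norm, hS]

theorem scomp_normIncl_apply (f : X → Y → ℝ≥0) (g : Y → Z → ℝ≥0) (x : X) :
    scomp (normIncl f) g x = (∑ y, f x y)⁻¹ • scomp f g x := by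
  funext z
  simp only [scomp, normIncl_apply, Pi.smul_apply, smul_eq_mul, Finset.mul_sum]
  exact Finset.sum_congr rfl fun y _ => by rw [div_eq_inv_mul, mul_assoc]

theorem scomp_apply_eq_zero_of_sum_eq_zero {f : X → Y → ℝ≥0} (g : Y → Z → ℝ≥0) {x : X}
    (hx : ∑ y, f x y = 0) : scomp f g x = 0 := by
  funext z
  simp [scomp, Finset.sum_eq_zero_iff.mp hx]

end

theorem renormalization_general {X Y Z : Type*} [Fintype Y] [Fintype Z]
    (f : X → Y → ℝ≥0) (g : Y → Z → ℝ≥0) :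
    norm (scomp f g) = norm (scomp (normIncl f) g) := by
  funext x
  refine (norm_apply_eq_of_smul (scomp_normIncl_apply f g x) fun hS => ?_).symm
  exact scomp_apply_eq_zero_of_sum_eq_zero g (inv_eq_zero.mp hS)

/-- The renormalization equation: `n(f;g) = n(n(f)•; g)`. -/
theorem renormalization {X Y Z : Type*} [Fintype Y] [Fintype Z]
    (f : X → Y → ℝ≥0) (g : Y → Z → ℝ≥0)
    (hf : IsSubstochastic f) (hg : IsSubstochastic g) :
    norm (scomp f g) = norm (scomp (normIncl f) g) :=
  renormalization_general f g
end

section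
/- The support map from subdistribution composition to may-must relation composition is functorial: for substochastic kernels f : X → DMY and g : Y → DMZ on finite sets, supp(f;g) = supp(f);supp(g), where on the left ; is substochastic composition and on the right it is may-must relational composition, with the failure element handled accordingly: (supp f ; supp g)(x;z) = ∃y, supp f (x;y) ∧ supp g (y;z), and (supp f ; supp g)(x;⊥) = supp f (x;⊥) ∨ ∃y, supp f (x;y) ∧ supp g (y;⊥). -/
/-! The total mass of `f ; g` at `x` is the `f x`-weighted sum of the total masses of `g`.
As all masses are at most `1`, this weighted sum falls short of `1` exactly when the weights
do or some positively weighted mass does. -/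

open scoped NNReal

namespace NNReal

theorem mul_lt_self_iff {a b : ℝ≥0} : a * b < a ↔ 0 < a ∧ b < 1 := by
  rcases eq_zero_or_pos a with rfl | ha
  · simp
  · simp [ha, mul_lt_iff_lt_one_right ha]

variable {ι : Type*} [Fintype ι] {w s : ι → ℝ≥0}

theorem sum_mul_le_sum (hs : ∀ i, s i ≤ 1) : ∑ i, w i * s i ≤ ∑ i, w i :=
  Finset.sum_le_sum fun i _ => mul_le_of_le_one_right' (hs i)

theorem sum_mul_lt_sum_iff (hs : ∀ i, s i ≤ 1) :
    ∑ i, w i * s i < ∑ i, w i ↔ ∃ i, 0 < w i ∧ s i < 1 := by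
  constructor
  · intro h
    obtain ⟨i, -, hi⟩ := Finset.exists_lt_of_sum_lt h
    exact ⟨i, mul_lt_self_iff.1 hi⟩
  · rintro ⟨i, hi⟩
    exact Finset.sum_lt_sum (fun i _ => mul_le_of_le_one_right' (hs i))
      ⟨i, Finset.mem_univ i, mul_lt_self_iff.2 hi⟩

theorem sum_mul_lt_one_iff (hw : ∑ i, w i ≤ 1) (hs : ∀ i, s i ≤ 1) :
    ∑ i, w i * s i < 1 ↔ ∑ i, w i < 1 ∨ ∃ i, 0 < w i ∧ s i < 1 := by
  rw [← sum_mul_lt_sum_iff hs]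
  have hle := sum_mul_le_sum (w := w) hs
  constructor
  · intro h
    by_cases hw1 : ∑ i, w i < 1
    · exact Or.inl hw1
    · exact Or.inr (h.trans_le (not_lt.1 hw1))
  · rintro (h | h)
    · exact hle.trans_lt h
    · exact h.trans_le hw

end NNReal

theorem scomp_pos_iff {X Y Z : Type*} [Fintype Y] (f : X → Y → ℝ≥0) (g : Y → Z → ℝ≥0)
    (x : X) (z : Z) : 0 < scomp f g x z ↔ ∃ y, 0 < f x y ∧ 0 < g y z := by
  simp only [scomp, Finset.sum_pos_iff, Finset.mem_univ, true_and,
    CanonicallyOrderedAdd.mul_pos]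

theorem sum_scomp {X Y Z : Type*} [Fintype Y] [Fintype Z] (f : X → Y → ℝ≥0)
    (g : Y → Z → ℝ≥0) (x : X) : ∑ z, scomp f g x z = ∑ y, f x y * ∑ z, g y z := by
  simp only [scomp, Finset.mul_sum]
  exact Finset.sum_comm

theorem supp_subStoch_functorial_general {X Y Z : Type*} [Fintype Y] [Fintype Z]
    (f : X → Y → ℝ≥0) (g : Y → Z → ℝ≥0)
    (hf : IsSubstochastic f) (hg : IsSubstochastic g) :
    (∀ (x : X) (z : Z), 0 < scomp f g x z ↔ ∃ y, 0 < f x y ∧ 0 < g y z)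
    ∧ (∀ x : X, (∑ z, scomp f g x z) < 1 ↔
        (∑ y, f x y) < 1 ∨ ∃ y, 0 < f x y ∧ (∑ z, g y z) < 1) :=
  ⟨scomp_pos_iff f g, fun x => by
    rw [sum_scomp]
    exact NNReal.sum_mul_lt_one_iff (hf x) hg⟩

/-- Support of a substochastic kernel: the may-must relation with
`supp f (x;y) ↔ f x y > 0` and `supp f (x;⊥) ↔ ∑ y, f x y < 1`.
The support map `subStoch → mmRel` is functorial: support of a composite is
the may-must relational composite of the supports. -/
theorem supp_subStoch_functorial {X Y Z : Type*} [Fintype X] [Fintype Y] [Fintype Z]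
    (f : X → Y → ℝ≥0) (g : Y → Z → ℝ≥0)
    (hf : IsSubstochastic f) (hg : IsSubstochastic g) :
    (∀ (x : X) (z : Z), 0 < scomp f g x z ↔ ∃ y, 0 < f x y ∧ 0 < g y z)
    ∧ (∀ x : X, (∑ z, scomp f g x z) < 1 ↔
        (∑ y, f x y) < 1 ∨ ∃ y, 0 < f x y ∧ (∑ z, g y z) < 1) :=
  supp_subStoch_functorial_general f g hf hg
end

section
/- Support sends normalized-kernel composition to relational composition: for normalized kernels f : X → MDY and g : Y → MDZ on finite sets, supp(f ⊛ g) = supp(f) ; supp(g), where ⊛ is renormalized composition and ; is ordinary relational composition (with supp mapping ⊥ at input x to the empty relation at x). -/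
open scoped NNReal

/-- Support of a normalized kernel: `x` relates to `y` iff `f x ≠ ⊥` and the
distribution assigns positive probability to `y`. Failure at `x` gives the
empty relation at `x`. -/
def supp {X Y : Type*} (f : X → Option (Y → ℝ≥0)) : X → Y → Prop :=
  fun x y => ∃ d, f x = some d ∧ 0 < d y

lemma toSub_pos_iff {X Y : Type*} (f : X → Option (Y → ℝ≥0)) (x : X) (y : Y) :
    0 < toSub f x y ↔ supp f x y := by
  unfold toSub supp
  cases f x <;> simp

lemma sum_toSub_mul_pos_iff {X Y Z : Type*} [Fintype Y]
    (f : X → Option (Y → ℝ≥0)) (g : Y → Option (Z → ℝ≥0)) (x : X) (z : Z) :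
    0 < ∑ y, toSub f x y * toSub g y z ↔ ∃ y, supp f x y ∧ supp g y z := by
  simp only [Finset.sum_pos_iff, CanonicallyOrderedAdd.mul_pos, toSub_pos_iff,
    Finset.mem_univ, true_and]

lemma sum_toSub_mul_le_total {X Y Z : Type*} [Fintype Y] [Fintype Z]
    (f : X → Option (Y → ℝ≥0)) (g : Y → Option (Z → ℝ≥0)) (x : X) (z : Z) :
    ∑ y, toSub f x y * toSub g y z ≤ ∑ y, ∑ z', toSub f x y * toSub g y z' :=
  Finset.sum_le_sum fun y _ =>
    Finset.single_le_sum (f := fun z' => toSub f x y * toSub g y z') (fun _ _ => zero_le)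
      (Finset.mem_univ z)

lemma supp_ncomp_iff {X Y Z : Type*} [Fintype Y] [Fintype Z]
    (f : X → Option (Y → ℝ≥0)) (g : Y → Option (Z → ℝ≥0)) (x : X) (z : Z) :
    supp (ncomp f g) x z ↔ 0 < ∑ y, toSub f x y * toSub g y z := by
  have hle := sum_toSub_mul_le_total f g x z
  unfold supp ncomp
  split_ifs with htotal
  · simp only [false_and, exists_false, false_iff, not_lt]
    exact htotal ▸ hle
  · simp only [Option.some.injEq, exists_eq_left', div_pos_iff_of_pos_right
      (pos_iff_ne_zero.2 htotal)]

theorem supp_ncomp_relational_general {X Y Z : Type*} [Fintype Y] [Fintype Z]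
    (f : X → Option (Y → ℝ≥0)) (g : Y → Option (Z → ℝ≥0)) :
    ∀ (x : X) (z : Z), supp (ncomp f g) x z ↔ ∃ y, supp f x y ∧ supp g y z := by
  intro x z
  rw [supp_ncomp_iff, sum_toSub_mul_pos_iff]

/-- Support sends renormalized composition of normalized kernels to ordinary
relational composition. -/
theorem supp_ncomp_relational {X Y Z : Type*} [Fintype Y] [Fintype Z]
    (f : X → Option (Y → ℝ≥0)) (g : Y → Option (Z → ℝ≥0))
    (hf : IsNormalizedKernel f) (hg : IsNormalizedKernel g) :
    ∀ (x : X) (z : Z), supp (ncomp f g) x z ↔ ∃ y, supp f x y ∧ supp g y z :=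
  supp_ncomp_relational_general f g
end

section
/- The open interval (0,1) with p* = 1 − p, p • q = p·q, and p ∘ q = p(1−q)/(1−pq) is a symmetric tricocycloid: it satisfies p** = p, the pentagon equations (p•(q•r) = (p•q)•r, (p•q)∘r = (p∘(q•r))•(q∘r), p∘q = (p∘(q•r))∘(q∘r)), the hexagon equations ((p•q)*•(p∘q) = p•q*, (p•q)*∘(p∘q) = (p∘q*)*), and the map (p,q) ↦ (p•q, p∘q) is a bijection of (0,1)² onto itself. -/
/-!
Apart from bijectivity, every clause is an identity of rational functions, valid wherever the
denominators `1 - p q` involved do not vanish, and on `(0,1)` they never do. The inverse of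
`(p, q) ↦ (p q, p ∘ q)` comes from the first hexagon equation `(1 - p q) (p ∘ q) = p (1 - q)`,
which rearranges to `p = p q + (p ∘ q) (1 - p q)`: thus `p`, and then `q = p q / p`, are
determined by `(p q, p ∘ q)`.
-/

open Set

namespace Tricocycloid

section Field

variable {K : Type*} [Field K] {p q r : K}

def circ (p q : K) : K := p * (1 - q) / (1 - p * q)

theorem one_sub_mul_mul_circ (hpq : 1 - p * q ≠ 0) : (1 - p * q) * circ p q = p * (1 - q) :=
  mul_div_cancel₀ _ hpq

theorem mul_add_circ_mul_one_sub_mul (hpq : 1 - p * q ≠ 0) :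
    p * q + circ p q * (1 - p * q) = p := by
  rw [mul_comm (circ p q), one_sub_mul_mul_circ hpq]
  ring

theorem circ_mul_left (hqr : 1 - q * r ≠ 0) : circ (p * q) r = circ p (q * r) * circ q r := by
  unfold circ
  field_simp

theorem one_sub_circ_mul_circ (hqr : 1 - q * r ≠ 0) (hpqr : 1 - p * (q * r) ≠ 0) :
    1 - circ p (q * r) * circ q r = (1 - p * q) / (1 - p * (q * r)) := by
  rw [← mul_assoc] at hpqr
  unfold circ
  field_simp
  ring

theorem circ_circ_mul_circ (hpq : 1 - p * q ≠ 0) (hqr : 1 - q * r ≠ 0)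
    (hpqr : 1 - p * (q * r) ≠ 0) : circ (circ p (q * r)) (circ q r) = circ p q := by
  rw [circ, one_sub_circ_mul_circ hqr hpqr]
  rw [← mul_assoc] at hpqr
  unfold circ
  field_simp
  ring

theorem circ_one_sub_mul_circ (hpq : 1 - p * q ≠ 0) (hpq' : 1 - p * (1 - q) ≠ 0) :
    circ (1 - p * q) (circ p q) = 1 - circ p (1 - q) := by
  rw [circ, one_sub_mul_mul_circ hpq]
  unfold circ
  field_simp
  ring

end Field

section Order

variable {R : Type*} [Ring R] [PartialOrder R] [IsStrictOrderedRing R] {p q : R}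

theorem mul_mem_Ioo (hp : p ∈ Ioo (0 : R) 1) (hq : q ∈ Ioo (0 : R) 1) : p * q ∈ Ioo (0 : R) 1 :=
  ⟨mul_pos hp.1 hq.1, mul_lt_one_of_nonneg_of_lt_one_left hp.1.le hp.2 hq.2.le⟩

theorem one_sub_mul_pos (hp : p ∈ Ioo (0 : R) 1) (hq : q ∈ Ioo (0 : R) 1) : 0 < 1 - p * q :=
  sub_pos.2 (mul_mem_Ioo hp hq).2

end Order

section OrderedField

variable {K : Type*} [Field K] [LinearOrder K] [IsStrictOrderedRing K] {p q : K}

theorem circ_mem_Ioo (hp : p ∈ Ioo (0 : K) 1) (hq : q ∈ Ioo (0 : K) 1) :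
    circ p q ∈ Ioo (0 : K) 1 := by
  have hpq := one_sub_mul_pos hp hq
  refine ⟨div_pos (mul_pos hp.1 (sub_pos.2 hq.2)) hpq, (div_lt_one hpq).2 ?_⟩
  linarith [hq.1, hp.2]

theorem existsUnique_mul_circ_eq {a b : K} (ha : a ∈ Ioo (0 : K) 1) (hb : b ∈ Ioo (0 : K) 1) :
    ∃! pq : K × K, pq.1 ∈ Ioo (0 : K) 1 ∧ pq.2 ∈ Ioo (0 : K) 1
      ∧ pq.1 * pq.2 = a ∧ circ pq.1 pq.2 = b := by
  have h1a : 0 < 1 - a := sub_pos.2 ha.2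
  set p := a + b * (1 - a)
  have hp : p ∈ Ioo (0 : K) 1 := by
    constructor <;> nlinarith [ha.1, hb.1, hb.2]
  have hap : a < p := by nlinarith [hb.1]
  refine ⟨(p, a / p), ⟨hp, ⟨div_pos ha.1 hp.1, (div_lt_one hp.1).2 hap⟩, ?_, ?_⟩, ?_⟩
  · exact mul_div_cancel₀ a hp.1.ne'
  · have hpq : p * (a / p) = a := mul_div_cancel₀ a hp.1.ne'
    have key := mul_add_circ_mul_one_sub_mul (q := a / p) (hpq ▸ h1a.ne')
    rw [hpq] at key
    exact mul_right_cancel₀ h1a.ne' (by linear_combination key)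
  · rintro ⟨p', q'⟩ ⟨hp', hq', hpq', hcirc'⟩
    dsimp only at hp' hq' hpq' hcirc'
    have hp'_eq : p' = p := by
      rw [← mul_add_circ_mul_one_sub_mul (one_sub_mul_pos hp' hq').ne', hpq', hcirc']
    refine Prod.ext hp'_eq (eq_div_of_mul_eq hp.1.ne' ?_)
    rw [← hp'_eq, mul_comm, hpq']

end OrderedField

end Tricocycloid

open Tricocycloid

/-- The open interval (0,1) with `p* = 1 - p`, `p • q = p*q`, and
`p ∘ q = p(1-q)/(1-pq)` is a symmetric tricocycloid: involution, pentagon and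
hexagon equations hold, and `(p,q) ↦ (p•q, p∘q)` is a bijection of `(0,1)²`. -/
theorem interval_symmetric_tricocycloid :
    (∀ p ∈ Ioo (0:ℝ) 1, ∀ q ∈ Ioo (0:ℝ) 1, p * q ∈ Ioo (0:ℝ) 1
        ∧ p * (1 - q) / (1 - p * q) ∈ Ioo (0:ℝ) 1 ∧ 1 - p ∈ Ioo (0:ℝ) 1)
    ∧ (∀ p ∈ Ioo (0:ℝ) 1, 1 - (1 - p) = p)
    -- pentagon equations
    ∧ (∀ p ∈ Ioo (0:ℝ) 1, ∀ q ∈ Ioo (0:ℝ) 1, ∀ r ∈ Ioo (0:ℝ) 1,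
        p * (q * r) = (p * q) * r)
    ∧ (∀ p ∈ Ioo (0:ℝ) 1, ∀ q ∈ Ioo (0:ℝ) 1, ∀ r ∈ Ioo (0:ℝ) 1,
        (p * q) * (1 - r) / (1 - (p * q) * r)
          = (p * (1 - q * r) / (1 - p * (q * r)))
              * (q * (1 - r) / (1 - q * r)))
    ∧ (∀ p ∈ Ioo (0:ℝ) 1, ∀ q ∈ Ioo (0:ℝ) 1, ∀ r ∈ Ioo (0:ℝ) 1,
        p * (1 - q) / (1 - p * q)
          = (p * (1 - q * r) / (1 - p * (q * r)))
              * (1 - (q * (1 - r) / (1 - q * r)))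
              / (1 - (p * (1 - q * r) / (1 - p * (q * r)))
                  * (q * (1 - r) / (1 - q * r))))
    -- hexagon equations
    ∧ (∀ p ∈ Ioo (0:ℝ) 1, ∀ q ∈ Ioo (0:ℝ) 1,
        (1 - p * q) * (p * (1 - q) / (1 - p * q)) = p * (1 - q))
    ∧ (∀ p ∈ Ioo (0:ℝ) 1, ∀ q ∈ Ioo (0:ℝ) 1,
        (1 - p * q) * (1 - (p * (1 - q) / (1 - p * q)))
            / (1 - (1 - p * q) * (p * (1 - q) / (1 - p * q)))
          = 1 - (p * (1 - (1 - q)) / (1 - p * (1 - q))))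
    -- joint bijectivity of the associators
    ∧ (∀ a ∈ Ioo (0:ℝ) 1, ∀ b ∈ Ioo (0:ℝ) 1,
        ∃! pq : ℝ × ℝ, pq.1 ∈ Ioo (0:ℝ) 1 ∧ pq.2 ∈ Ioo (0:ℝ) 1
          ∧ pq.1 * pq.2 = a ∧ pq.1 * (1 - pq.2) / (1 - pq.1 * pq.2) = b) := by
  refine ⟨fun p hp q hq => ⟨mul_mem_Ioo hp hq, circ_mem_Ioo hp hq, Ioo.one_sub_mem hp⟩,
    fun p _ => sub_sub_cancel 1 p, fun p _ q _ r _ => (mul_assoc p q r).symm, ?_, ?_,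
    fun p hp q hq => one_sub_mul_mul_circ (one_sub_mul_pos hp hq).ne', ?_,
    fun a ha b hb => existsUnique_mul_circ_eq ha hb⟩
  · intro p _ q hq r hr
    exact circ_mul_left (one_sub_mul_pos hq hr).ne'
  · intro p hp q hq r hr
    exact (circ_circ_mul_circ (one_sub_mul_pos hp hq).ne' (one_sub_mul_pos hq hr).ne'
      (one_sub_mul_pos hp (mul_mem_Ioo hq hr)).ne').symm
  · intro p hp q hq
    exact circ_one_sub_mul_circ (one_sub_mul_pos hp hq).ne'
      (one_sub_mul_pos hp (Ioo.one_sub_mem hq)).ne'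
end

section
/- The black-hole cast map cast : DMX → MDX, sending a distribution d over X ⊔ {⊥} to ⊥ if d(⊥) > 0 and to d otherwise, satisfies the multiplicativity equation over composition of kernels: for kernels f : X → DMY and g : Y → DMZ (extended to ⊥ by g(⊥) = δ_⊥), cast applied to the composite (f;g)(x) equals the composite of cast∘f with cast∘g in the sense: cast((f;g)(x)) = ⊥ if cast(f(x)) = ⊥ or f(x) assigns positive probability to some y with cast(g(y)) = ⊥; otherwise cast((f;g)(x)) = (f;g)(x). -/
open scoped NNReal Classical

/-- A kernel into distributions over `Y ⊔ {⊥}`: each value is a full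
distribution on `Option Y`. -/
def IsDMKernel {X Y : Type*} [Fintype Y] (f : X → Option Y → ℝ≥0) : Prop :=
  ∀ x, ∑ y : Option Y, f x y = 1

/-- Composition of kernels `X → DMY`, `Y → DMZ`, extending `g` to `⊥` by the
point mass at `⊥`. -/
noncomputable def dmComp {X Y Z : Type*} [Fintype Y] [Fintype Z]
    (f : X → Option Y → ℝ≥0) (g : Y → Option Z → ℝ≥0) :
    X → Option Z → ℝ≥0 := fun x z =>
  ∑ y : Option Y,
    f x y * (y.elim (fun z' => if z' = none then 1 else 0) g z)

/-- The black-hole cast `DMX → MDX`: failure if any mass lies on `⊥`,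
the distribution itself otherwise. -/
noncomputable def cast' {Y : Type*} [Fintype Y] (d : Option Y → ℝ≥0) :
    Option (Option Y → ℝ≥0) :=
  if 0 < d none then none else some d

section

variable {X Y Z : Type*} [Fintype Y] [Fintype Z]

lemma cast'_eq_none_iff (d : Option Y → ℝ≥0) : cast' d = none ↔ 0 < d none := by
  unfold cast'
  split_ifs <;> simp_all

lemma cast'_eq_some_of_not_eq_none {d : Option Y → ℝ≥0} (h : cast' d ≠ none) :
    cast' d = some d := by
  rw [Ne, cast'_eq_none_iff] at h
  simp [cast', h]

lemma dmComp_none (f : X → Option Y → ℝ≥0) (g : Y → Option Z → ℝ≥0) (x : X) :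
    dmComp f g x none = f x none + ∑ y : Y, f x (some y) * g y none := by
  simp [dmComp, Fintype.sum_option]

lemma dmComp_none_pos_iff (f : X → Option Y → ℝ≥0) (g : Y → Option Z → ℝ≥0) (x : X) :
    0 < dmComp f g x none ↔ 0 < f x none ∨ ∃ y, 0 < f x (some y) ∧ 0 < g y none := by
  simp only [dmComp_none, pos_iff_ne_zero, ne_eq, add_eq_zero, Finset.sum_eq_zero_iff,
    Finset.mem_univ, true_implies, mul_eq_zero, not_and_or, not_forall, not_or]

lemma cast'_dmComp_eq_none_iff (f : X → Option Y → ℝ≥0) (g : Y → Option Z → ℝ≥0) (x : X) :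
    cast' (dmComp f g x) = none ↔
      cast' (f x) = none ∨ ∃ y : Y, 0 < f x (some y) ∧ cast' (g y) = none := by
  simp only [cast'_eq_none_iff, dmComp_none_pos_iff]

end

theorem cast_multiplicative_general {X Y Z : Type*} [Fintype Y] [Fintype Z]
    (f : X → Option Y → ℝ≥0) (g : Y → Option Z → ℝ≥0) :
    ∀ x : X,
      ((cast' (f x) = none ∨ ∃ y : Y, 0 < f x (some y) ∧ cast' (g y) = none) →
        cast' (dmComp f g x) = none)
      ∧ (¬ (cast' (f x) = none ∨ ∃ y : Y, 0 < f x (some y) ∧ cast' (g y) = none) →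
        cast' (dmComp f g x) = some (dmComp f g x)) := fun x =>
  ⟨(cast'_dmComp_eq_none_iff f g x).mpr,
    fun h => cast'_eq_some_of_not_eq_none (mt (cast'_dmComp_eq_none_iff f g x).mp h)⟩

/-- The cast map is multiplicative over composition of kernels: the cast of a
composite is failure exactly when the cast of `f x` fails or `f x` hits some
`y` whose cast of `g y` fails; otherwise it is the composite itself. -/
theorem cast_multiplicative {X Y Z : Type*} [Fintype Y] [Fintype Z]
    (f : X → Option Y → ℝ≥0) (g : Y → Option Z → ℝ≥0)
    (hf : IsDMKernel f) (hg : IsDMKernel g) :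
    ∀ x : X,
      ((cast' (f x) = none ∨ ∃ y : Y, 0 < f x (some y) ∧ cast' (g y) = none) →
        cast' (dmComp f g x) = none)
      ∧ (¬ (cast' (f x) = none ∨ ∃ y : Y, 0 < f x (some y) ∧ cast' (g y) = none) →
        cast' (dmComp f g x) = some (dmComp f g x)) :=
  cast_multiplicative_general f g
end

section
/- Partial-distribution composition (black-hole composition) of normalized kernels is associative: for f : X → MDY, g : Y → MDZ, h : Z → MDW defined as (f ⋆ g)(x;z) = Σ_y f(x;y)g(y;z) when this defines a full distribution (total mass 1) and ⊥ otherwise (including when f(x) = ⊥ or some y in the support of f(x) has g(y) = ⊥), one has (f ⋆ g) ⋆ h = f ⋆ (g ⋆ h). -/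
open scoped NNReal Classical

/-- Black-hole (partial-distribution) composition of normalized kernels:
failure whenever `f x` fails or `g` fails on the support of `f x`. -/
noncomputable def bcomp {X Y Z : Type*} [Fintype Y]
    (f : X → Option (Y → ℝ≥0)) (g : Y → Option (Z → ℝ≥0)) :
    X → Option (Z → ℝ≥0) := fun x =>
  match f x with
  | none => none
  | some d =>
    if ∃ y, 0 < d y ∧ g y = none then none
    else some (fun z => ∑ y, d y * (g y).elim 0 (fun e => e z))

lemma bcomp_some {X Y Z : Type*} [Fintype Y]
    (f : X → Option (Y → ℝ≥0)) (g : Y → Option (Z → ℝ≥0)) {x : X} {d : Y → ℝ≥0}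
    (hfx : f x = some d) :
    bcomp f g x =
      if ∃ y, 0 < d y ∧ g y = none then none
      else some (fun z => ∑ y, d y * (g y).elim 0 (fun e => e z)) := by
  simp [bcomp, hfx]

lemma bcomp_none {X Y Z : Type*} [Fintype Y]
    (f : X → Option (Y → ℝ≥0)) (g : Y → Option (Z → ℝ≥0)) {x : X}
    (hfx : f x = none) : bcomp f g x = none := by
  simp [bcomp, hfx]

/-- Black-hole composition of normalized kernels is associative. -/
theorem bcomp_assoc {X Y Z W : Type*} [Fintype Y] [Fintype Z] [Fintype W]
    (f : X → Option (Y → ℝ≥0)) (g : Y → Option (Z → ℝ≥0))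
    (h : Z → Option (W → ℝ≥0))
    (hf : IsNormalizedKernel f) (hg : IsNormalizedKernel g)
    (hh : IsNormalizedKernel h) :
    bcomp (bcomp f g) h = bcomp f (bcomp g h) := by
  funext x
  cases hfx : f x with
  | none => rw [bcomp_none _ h (bcomp_none f g hfx), bcomp_none f _ hfx]
  | some d =>
    rw [bcomp_some f (bcomp g h) hfx]
    by_cases hA : ∃ y, 0 < d y ∧ g y = none
    · obtain ⟨y, hy, hgy⟩ := hA
      rw [bcomp_none _ h
        (by rw [bcomp_some f g hfx, if_pos ⟨y, hy, hgy⟩]),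
        if_pos ⟨y, hy, bcomp_none g h hgy⟩]
    · push_neg at hA
      set D : Z → ℝ≥0 := fun z => ∑ y, d y * (g y).elim 0 (fun e => e z) with hD
      have hfg : bcomp f g x = some D := by
        rw [bcomp_some f g hfx, if_neg]
        push_neg; exact hA
      rw [bcomp_some _ h hfg]
      have hDpos : ∀ z, 0 < D z ↔ ∃ y, 0 < d y ∧ 0 < (g y).elim 0 (fun e => e z) := by
        intro z
        rw [hD, pos_iff_ne_zero, Ne, Finset.sum_eq_zero_iff]
        push_neg
        simp only [Finset.mem_univ, true_implies, true_and, mul_ne_zero_iff, pos_iff_ne_zero,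
          exists_prop]
      have hiff : (∃ z, 0 < D z ∧ h z = none) ↔
          (∃ y, 0 < d y ∧ bcomp g h y = none) := by
        constructor
        · rintro ⟨z, hz, hhz⟩
          obtain ⟨y, hy, hey⟩ := (hDpos z).mp hz
          refine ⟨y, hy, ?_⟩
          obtain ⟨e, hge⟩ := Option.ne_none_iff_exists'.mp (hA y hy)
          rw [hge] at hey
          rw [bcomp_some g h hge, if_pos ⟨z, hey, hhz⟩]
        · rintro ⟨y, hy, hghy⟩
          obtain ⟨e, hge⟩ := Option.ne_none_iff_exists'.mp (hA y hy)
          rw [bcomp_some g h hge] at hghy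
          by_cases hB : ∃ z, 0 < e z ∧ h z = none
          · obtain ⟨z, hz, hhz⟩ := hB
            exact ⟨z, (hDpos z).mpr ⟨y, hy, by rw [hge]; exact hz⟩, hhz⟩
          · rw [if_neg hB] at hghy; exact absurd hghy (by simp)
      by_cases hB : ∃ z, 0 < D z ∧ h z = none
      · rw [if_pos hB, if_pos (hiff.mp hB)]
      · rw [if_neg hB, if_neg (hiff.not.mp hB)]
        congr 1
        funext w
        rw [hD]
        rw [Finset.sum_congr rfl (fun z _ => Finset.sum_mul _ _ _), Finset.sum_comm]
        refine Finset.sum_congr rfl fun y _ => ?_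
        by_cases hy : 0 < d y
        · obtain ⟨e, hge⟩ := Option.ne_none_iff_exists'.mp (hA y hy)
          have hBe : ¬ ∃ z, 0 < e z ∧ h z = none := by
            intro ⟨z, hz, hhz⟩
            exact hB ⟨z, (hDpos z).mpr ⟨y, hy, by rw [hge]; exact hz⟩, hhz⟩
          rw [bcomp_some g h hge, if_neg hBe, hge]
          simp [Finset.mul_sum, mul_assoc]
        · have : d y = 0 := by simpa using hy
          simp [this]
end
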